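/- arXiv:1912.03783 — 5 statements merged into one kernel-verified Lean document; each statement's English description precedes it below -/
import Mathlib

section
/- The problem of finding a maximal acyclic subgraph of a directed graph G with Boolean adjacency matrix A is equivalent to finding the closest nonnegative matrix X to A in Frobenius norm with ρ(X)=0: every optimal X for the matrix problem is a Boolean matrix X ≤ A whose graph is a maximal acyclic subgraph, and the minimal Frobenius distance equals the square root of the minimal number of edges that must be deleted from G to make it acyclic. -/
open scoped Classical

/-- Spectral radius of a real square matrix. -/
noncomputable def specRad {m : Type*} [Fintype m] [DecidableEq m]
    (A : Matrix m m ℝ) : ℝ :=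
  sSup ((fun μ : ℂ => ‖μ‖) '' spectrum ℂ (A.map (algebraMap ℝ ℂ)))

/-- Frobenius norm of a real matrix. -/
noncomputable def frob {n : ℕ} (M : Matrix (Fin n) (Fin n) ℝ) : ℝ :=
  Real.sqrt (∑ i, ∑ j, (M i j) ^ 2)

/-- A directed graph is acyclic if no vertex reaches itself by a nonempty walk. -/
def Acyclic {n : ℕ} (E : Fin n → Fin n → Prop) : Prop :=
  ∀ v : Fin n, ¬ Relation.TransGen E v v

/-!
A real matrix has spectral radius zero iff its characteristic polynomial is `X ^ n`, i.e. iff it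
is nilpotent. For an entrywise nonnegative matrix, nilpotency means that the graph of nonzero
entries is acyclic: a cycle through `v` makes `(X ^ k) v v > 0` for all multiples `k` of its
length, while along an acyclic graph the number of ancestors strictly increases with every edge,
so a nonzero entry of `X ^ k` needs `k` less than the number of vertices.

Now let `X` be optimal. Replacing every nonzero entry of `X` by the corresponding entry of `A`
keeps the graph of `X`, hence stays feasible, and does not increase any entry of `(X - A) ^ 2`.
By optimality no entry changes, so `X` is the `0/1` matrix of an acyclic subgraph of `A`, and
`‖X - A‖_F ^ 2` counts the deleted edges. Comparing with the matrices of all other acyclic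
subgraphs gives maximality.
-/

open Finset

namespace Relation

variable {ι : Type*} [Fintype ι] {r : ι → ι → Prop}

noncomputable def ancestorCount (r : ι → ι → Prop) (v : ι) : ℕ :=
  #{u | TransGen r u v}

theorem ancestorCount_lt_card (hr : ∀ v, ¬ TransGen r v v) (v : ι) :
    ancestorCount r v < Fintype.card ι :=
  card_lt_univ_of_notMem (x := v) (by simpa using hr v)

theorem ancestorCount_lt_of_rel (hr : ∀ v, ¬ TransGen r v v) {u v : ι} (huv : r u v) :
    ancestorCount r u < ancestorCount r v := by
  refine card_lt_card ⟨fun w hw => ?_, fun hsub => hr u ?_⟩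
  · simp only [mem_filter, mem_univ, true_and] at hw ⊢
    exact hw.tail huv
  · simpa using hsub (by simpa using TransGen.single huv)

end Relation

namespace Matrix

variable {ι R : Type*}

section Semiring

variable [Fintype ι] [Semiring R] [DecidableEq ι] {B : Matrix ι ι R}

theorem ancestorCount_add_le_of_pow_apply_ne_zero
    (hB : ∀ v, ¬ Relation.TransGen (fun i j => B j i ≠ 0) v v) {k : ℕ} {i j : ι}
    (h : (B ^ k) j i ≠ 0) :
    Relation.ancestorCount (fun i j => B j i ≠ 0) i + k ≤
      Relation.ancestorCount (fun i j => B j i ≠ 0) j := by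
  induction k generalizing j with
  | zero =>
    obtain rfl : j = i := by
      by_contra hji
      exact h (by simp [one_apply_ne hji])
    simp
  | succ k ih =>
    rw [pow_succ', mul_apply] at h
    obtain ⟨m, -, hm⟩ := exists_ne_zero_of_sum_ne_zero h
    have hmj := Relation.ancestorCount_lt_of_rel hB (left_ne_zero_of_mul hm)
    have him := ih (right_ne_zero_of_mul hm)
    omega

theorem pow_card_eq_zero_of_not_transGen
    (hB : ∀ v, ¬ Relation.TransGen (fun i j => B j i ≠ 0) v v) : B ^ Fintype.card ι = 0 := by
  ext j i
  by_contra h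
  have hij := ancestorCount_add_le_of_pow_apply_ne_zero hB h
  have hj := Relation.ancestorCount_lt_card hB j
  omega

end Semiring

section Nonneg

variable [Fintype ι] [Semiring R] [PartialOrder R] [IsStrictOrderedRing R] {X : Matrix ι ι R}

theorem mul_apply_pos {P Q : Matrix ι ι R} (hP : ∀ i j, 0 ≤ P i j) (hQ : ∀ i j, 0 ≤ Q i j)
    {i m j : ι} (him : 0 < P i m) (hmj : 0 < Q m j) : 0 < (P * Q) i j :=
  (sum_pos_iff_of_nonneg fun l _ => mul_nonneg (hP i l) (hQ l j)).2
    ⟨m, mem_univ m, mul_pos him hmj⟩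

variable [DecidableEq ι]

theorem exists_pow_apply_pos_of_transGen (hX : ∀ i j, 0 ≤ X i j) {u w : ι}
    (h : Relation.TransGen (fun i j => X j i ≠ 0) u w) : ∃ k, 0 < k ∧ 0 < (X ^ k) w u := by
  induction h with
  | single huw => exact ⟨1, one_pos, by simpa using (hX _ _).lt_of_ne' huw⟩
  | tail _ hvw ih =>
    obtain ⟨k, hk, hpos⟩ := ih
    refine ⟨k + 1, k.succ_pos, ?_⟩
    rw [pow_succ']
    exact mul_apply_pos hX (pow_apply_nonneg hX k) ((hX _ _).lt_of_ne' hvw) hpos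

theorem pow_apply_self_pos (hX : ∀ i j, 0 ≤ X i j) {v : ι} (hv : 0 < X v v) (m : ℕ) :
    0 < (X ^ m) v v := by
  induction m with
  | zero => simp
  | succ m ih => rw [pow_succ]; exact mul_apply_pos (pow_apply_nonneg hX m) hX ih hv

theorem not_transGen_of_isNilpotent (hX : ∀ i j, 0 ≤ X i j) (hnil : IsNilpotent X) (v : ι) :
    ¬ Relation.TransGen (fun i j => X j i ≠ 0) v v := by
  intro hv
  obtain ⟨k, hk, hpos⟩ := exists_pow_apply_pos_of_transGen hX hv
  obtain ⟨m, hm⟩ := hnil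
  have hpow := pow_apply_self_pos (pow_apply_nonneg hX k) hpos m
  rw [← pow_mul, pow_mul', hm, zero_pow hk.ne'] at hpow
  exact hpow.ne rfl

end Nonneg

open Polynomial in
theorem isNilpotent_iff_spectrum_subset_zero {K : Type*} [Field K] [IsAlgClosed K]
    [Fintype ι] [DecidableEq ι] (M : Matrix ι ι K) : IsNilpotent M ↔ spectrum K M ⊆ {0} := by
  constructor
  · intro hM μ hμ
    have hchar : M.charpoly = X ^ Fintype.card ι :=
      sub_eq_zero.mp (isNilpotent_charpoly_sub_pow_of_isNilpotent hM).eq_zero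
    rw [mem_spectrum_iff_isRoot_charpoly, hchar, IsRoot, eval_pow, eval_X] at hμ
    exact IsNilpotent.eq_zero ⟨_, hμ⟩
  · intro hM
    have hroots : ∀ a ∈ M.charpoly.roots, a = 0 := fun a ha =>
      hM (mem_spectrum_iff_isRoot_charpoly.mpr (isRoot_of_mem_roots ha))
    obtain ⟨k, hchar⟩ : ∃ k, M.charpoly = X ^ k := by
      have hfactor := (IsAlgClosed.splits M.charpoly).eq_prod_roots_of_monic M.charpoly_monic
      rw [Multiset.map_congr (g := fun _ => X) rfl fun a ha => by rw [hroots a ha, C_0, sub_zero],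
        Multiset.map_const', Multiset.prod_replicate] at hfactor
      exact ⟨_, hfactor⟩
    exact ⟨k, by simpa [hchar] using M.aeval_self_charpoly⟩

noncomputable def restrictToSupport {κ : Type*} [Zero R] (A X : Matrix ι κ R) : Matrix ι κ R :=
  of fun i j => if X i j = 0 then 0 else A i j

section RestrictToSupport

variable {κ : Type*} {A X : Matrix ι κ R}

theorem restrictToSupport_nonneg [Zero R] [Preorder R] (hA : ∀ i j, 0 ≤ A i j) (i : ι) (j : κ) :
    0 ≤ A.restrictToSupport X i j := by
  simp only [restrictToSupport, of_apply]
  split_ifs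
  exacts [le_rfl, hA i j]

theorem ne_zero_of_restrictToSupport_ne_zero [Zero R] {i : ι} {j : κ}
    (h : A.restrictToSupport X i j ≠ 0) : X i j ≠ 0 := by
  intro hX
  simp [restrictToSupport, hX] at h

theorem not_transGen_restrictToSupport [Zero R] {A X : Matrix ι ι R}
    (hX : ∀ v, ¬ Relation.TransGen (fun i j => X j i ≠ 0) v v) (v : ι) :
    ¬ Relation.TransGen (fun i j => A.restrictToSupport X j i ≠ 0) v v := fun hv =>
  hX v (Relation.TransGen.mono (fun _ _ => ne_zero_of_restrictToSupport_ne_zero) _ _ hv)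

variable [Ring R] [LinearOrder R] [IsStrictOrderedRing R] (i : ι) (j : κ)

theorem sq_sub_restrictToSupport_le :
    ((A.restrictToSupport X - A) i j) ^ 2 ≤ ((X - A) i j) ^ 2 := by
  by_cases hX : X i j = 0
  · simp [restrictToSupport, hX]
  · simpa [restrictToSupport, hX] using sq_nonneg (X i j - A i j)

theorem eq_zero_or_eq_of_sq_sub_restrictToSupport_eq
    (h : ((A.restrictToSupport X - A) i j) ^ 2 = ((X - A) i j) ^ 2) :
    X i j = 0 ∨ X i j = A i j := by
  refine or_iff_not_imp_left.2 fun hX => ?_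
  simp only [restrictToSupport, sub_apply, of_apply, if_neg hX, sub_self] at h
  rw [zero_pow two_ne_zero, eq_comm, pow_eq_zero_iff two_ne_zero, sub_eq_zero] at h
  exact h

end RestrictToSupport

theorem nonneg_of_forall_eq_zero_or_eq_one {κ : Type*} [Semiring R] [PartialOrder R]
    [IsOrderedRing R] {B : Matrix ι κ R} (hB : ∀ i j, B i j = 0 ∨ B i j = 1) (i : ι) (j : κ) :
    0 ≤ B i j :=
  (hB i j).elim (fun h => h.ge) fun h => h ▸ zero_le_one

theorem sum_sum_sq_sub_eq_sub {κ : Type*} [Fintype ι] [Fintype κ] [Ring R] [PartialOrder R]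
    [IsStrictOrderedRing R] {A B : Matrix ι κ R} (hA : ∀ i j, A i j = 0 ∨ A i j = 1)
    (hB : ∀ i j, B i j = 0 ∨ B i j = 1) (hBA : ∀ i j, B i j ≤ A i j) :
    ∑ i, ∑ j, ((B - A) i j) ^ 2 = ∑ i, ∑ j, A i j - ∑ i, ∑ j, B i j := by
  simp only [← sum_sub_distrib, sub_apply]
  refine sum_congr rfl fun i _ => sum_congr rfl fun j _ => ?_
  have hle := hBA i j
  rcases hA i j with ha | ha <;> rcases hB i j with hb | hb <;> simp only [ha, hb] at hle ⊢
  case inl.inr => exact absurd hle zero_lt_one.not_ge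
  all_goals norm_num

end Matrix

theorem Finset.sum_sum_eq_sum_sum_iff_of_le {ι κ M : Type*} [Fintype ι] [Fintype κ]
    [AddCommMonoid M] [PartialOrder M] [IsOrderedCancelAddMonoid M] {f g : ι → κ → M}
    (h : ∀ i j, f i j ≤ g i j) :
    ∑ i, ∑ j, f i j = ∑ i, ∑ j, g i j ↔ ∀ i j, f i j = g i j := by
  rw [sum_eq_sum_iff_of_le fun i _ => sum_le_sum fun j _ => h i j]
  simp only [mem_univ, forall_const, sum_eq_sum_iff_of_le fun j _ => h _ j]

theorem specRad_eq_zero_iff_spectrum_subset_zero {m : Type*} [Fintype m] [DecidableEq m]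
    (A : Matrix m m ℝ) : specRad A = 0 ↔ spectrum ℂ (A.map (algebraMap ℝ ℂ)) ⊆ {0} := by
  have hbdd : BddAbove ((fun μ : ℂ => ‖μ‖) '' spectrum ℂ (A.map (algebraMap ℝ ℂ))) :=
    ((Matrix.finite_spectrum _).image _).bddAbove
  constructor
  · intro h μ hμ
    have hμA : ‖μ‖ ≤ specRad A := le_csSup hbdd ⟨μ, hμ, rfl⟩
    simpa [h] using hμA
  · intro h
    refine le_antisymm (Real.sSup_nonpos ?_) (Real.sSup_nonneg ?_) <;>
      rintro _ ⟨μ, hμ, rfl⟩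
    · simp [Set.mem_singleton_iff.mp (h hμ)]
    · exact norm_nonneg μ

theorem specRad_eq_zero_iff_isNilpotent {m : Type*} [Fintype m] [DecidableEq m]
    (A : Matrix m m ℝ) : specRad A = 0 ↔ IsNilpotent A := by
  rw [specRad_eq_zero_iff_spectrum_subset_zero, ← Matrix.isNilpotent_iff_spectrum_subset_zero]
  exact IsNilpotent.map_iff (f := (algebraMap ℝ ℂ).mapMatrix)
    (Matrix.map_injective (algebraMap ℝ ℂ).injective)

theorem frob_le_frob_iff {n : ℕ} (M N : Matrix (Fin n) (Fin n) ℝ) :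
    frob M ≤ frob N ↔ ∑ i, ∑ j, (M i j) ^ 2 ≤ ∑ i, ∑ j, (N i j) ^ 2 :=
  Real.sqrt_le_sqrt_iff (by positivity)

/-- MAS vs the closest nilpotent nonnegative matrix problem.  Let `A` be a
Boolean adjacency matrix (edge `i → j` iff `A j i = 1`) and let `X` be a
minimizer of `‖X - A‖_F` over nonnegative matrices with spectral radius `0`.
Then `X` is Boolean, `X ≤ A` entrywise, the graph of `X` is an acyclic subgraph
of the graph of `A` with the maximal possible number of edges (a maximal
acyclic subgraph), and the minimal distance `‖X - A‖_F` equals the square root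
of the minimal number of deleted edges. -/
theorem stmt6 {n : ℕ} (A X : Matrix (Fin n) (Fin n) ℝ)
    (hA : ∀ i j, A i j = 0 ∨ A i j = 1)
    (hX0 : ∀ i j, 0 ≤ X i j) (hXρ : specRad X = 0)
    (hmin : ∀ Y : Matrix (Fin n) (Fin n) ℝ,
      (∀ i j, 0 ≤ Y i j) → specRad Y = 0 → frob (X - A) ≤ frob (Y - A)) :
    (∀ i j, X i j = 0 ∨ X i j = 1) ∧
    (∀ i j, X i j ≤ A i j) ∧
    Acyclic (fun i j => X j i ≠ 0) ∧
    (∀ B : Matrix (Fin n) (Fin n) ℝ, (∀ i j, B i j = 0 ∨ B i j = 1) →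
      (∀ i j, B i j ≤ A i j) → Acyclic (fun i j => B j i ≠ 0) →
      ∑ i, ∑ j, B i j ≤ ∑ i, ∑ j, X i j) ∧
    frob (X - A) = Real.sqrt ((∑ i, ∑ j, A i j) - ∑ i, ∑ j, X i j) := by
  have hXacyc : Acyclic (fun i j => X j i ≠ 0) :=
    Matrix.not_transGen_of_isNilpotent hX0 ((specRad_eq_zero_iff_isNilpotent X).1 hXρ)
  have hopt : ∀ B : Matrix (Fin n) (Fin n) ℝ, (∀ i j, 0 ≤ B i j) →
      Acyclic (fun i j => B j i ≠ 0) →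
      ∑ i, ∑ j, ((X - A) i j) ^ 2 ≤ ∑ i, ∑ j, ((B - A) i j) ^ 2 := fun B hB0 hB =>
    (frob_le_frob_iff _ _).1 <| hmin B hB0 <|
      (specRad_eq_zero_iff_isNilpotent B).2 ⟨_, Matrix.pow_card_eq_zero_of_not_transGen hB⟩
  have hA0 := Matrix.nonneg_of_forall_eq_zero_or_eq_one hA
  have hXA : ∀ i j, X i j = 0 ∨ X i j = A i j := by
    have hle := Matrix.sq_sub_restrictToSupport_le (A := A) (X := X)
    have hround := hopt _ (Matrix.restrictToSupport_nonneg hA0)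
      (Matrix.not_transGen_restrictToSupport hXacyc)
    have heq := (sum_sum_eq_sum_sum_iff_of_le hle).1 <|
      le_antisymm (sum_le_sum fun i _ => sum_le_sum fun j _ => hle i j) hround
    exact fun i j => Matrix.eq_zero_or_eq_of_sq_sub_restrictToSupport_eq i j (heq i j)
  have hXbool : ∀ i j, X i j = 0 ∨ X i j = 1 := fun i j =>
    (hXA i j).elim Or.inl fun h => h ▸ hA i j
  have hXle : ∀ i j, X i j ≤ A i j := fun i j =>
    (hXA i j).elim (fun h => h ▸ hA0 i j) le_of_eq
  have hdist := Matrix.sum_sum_sq_sub_eq_sub hA hXbool hXle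
  refine ⟨hXbool, hXle, hXacyc, fun B hBbool hBle hBacyc => ?_, by rw [frob, hdist]⟩
  have hB := hopt B (Matrix.nonneg_of_forall_eq_zero_or_eq_one hBbool) hBacyc
  rw [hdist, Matrix.sum_sum_sq_sub_eq_sub hA hBbool hBle] at hB
  linarith
end

section
/- Collatz–Wielandt formula: for every nonnegative n×n matrix X, the spectral radius satisfies ρ(X) = sup{ λ ≥ 0 : there exists a nonzero vector u ≥ 0 with X u ≥ λ u (entrywise) }. -/
open scoped ENNReal NNReal

attribute [local instance] Matrix.linftyOpNormedRing Matrix.linftyOpNormedAlgebra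

section aux
variable {n : ℕ}

lemma map_norm_eq (A : Matrix (Fin n) (Fin n) ℝ) :
    ‖A.map (algebraMap ℝ ℂ)‖ = ‖A‖ := by
  have : ‖A.map (algebraMap ℝ ℂ)‖₊ = ‖A‖₊ := by
    simp [Matrix.linfty_opNNNorm_def, Matrix.map_apply, Complex.nnnorm_real]
  exact congrArg NNReal.toReal this

lemma map_pow_eq (A : Matrix (Fin n) (Fin n) ℝ) (k : ℕ) :
    (A.map (algebraMap ℝ ℂ)) ^ k = (A ^ k).map (algebraMap ℝ ℂ) := by
  have h : ∀ B : Matrix (Fin n) (Fin n) ℝ,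
      B.map (algebraMap ℝ ℂ) = (algebraMap ℝ ℂ).mapMatrix B := fun _ => rfl
  rw [h, h, map_pow]

lemma pow_entries_nonneg (X : Matrix (Fin n) (Fin n) ℝ) (hX : ∀ i j, 0 ≤ X i j)
    (k : ℕ) : ∀ i j, 0 ≤ (X ^ k) i j := by
  induction k with
  | zero => intro i j; simp [Matrix.one_apply]; positivity
  | succ k ih =>
    intro i j
    rw [pow_succ, Matrix.mul_apply]
    exact Finset.sum_nonneg fun l _ => mul_nonneg (ih i l) (hX l j)

lemma mulVec_mono (A : Matrix (Fin n) (Fin n) ℝ) (hA : ∀ i j, 0 ≤ A i j)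
    {a b : Fin n → ℝ} (hab : ∀ i, a i ≤ b i) : ∀ i, A.mulVec a i ≤ A.mulVec b i := by
  intro i
  simp only [Matrix.mulVec, dotProduct]
  exact Finset.sum_le_sum fun j _ => mul_le_mul_of_nonneg_left (hab j) (hA i j)

end aux

/-- Collatz–Wielandt formula: for every nonnegative `n × n` matrix `X`,
`ρ(X) = sup { λ ≥ 0 : ∃ u ≥ 0, u ≠ 0, X u ≥ λ u entrywise }`. -/
theorem stmt8 {n : ℕ} (X : Matrix (Fin n) (Fin n) ℝ) (hX : ∀ i j, 0 ≤ X i j) :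
    specRad X =
      sSup {lam : ℝ | 0 ≤ lam ∧ ∃ u : Fin n → ℝ, (∀ i, 0 ≤ u i) ∧ u ≠ 0 ∧
        ∀ i, lam * u i ≤ X.mulVec u i} := by
  set M := X.map (algebraMap ℝ ℂ) with hM
  set S := {lam : ℝ | 0 ≤ lam ∧ ∃ u : Fin n → ℝ, (∀ i, 0 ≤ u i) ∧ u ≠ 0 ∧
        ∀ i, lam * u i ≤ X.mulVec u i} with hS
  rcases Nat.eq_zero_or_pos n with hn | hn
  · -- n = 0 : both sides are sSup ∅ = 0
    subst hn
    have h1 : spectrum ℂ M = ∅ := by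
      ext μ
      simp only [spectrum.mem_iff, Set.mem_empty_iff_false, iff_false, not_not]
      exact isUnit_of_subsingleton _
    have h2 : S = ∅ := by
      ext lam
      simp only [hS, Set.mem_setOf_eq, Set.mem_empty_iff_false, iff_false]
      rintro ⟨-, u, -, hu, -⟩
      exact hu (Subsingleton.elim _ _)
    rw [specRad, ← hM, h1, h2]
    simp
  · have hne : Nonempty (Fin n) := ⟨⟨0, hn⟩⟩
    obtain ⟨μ, hμmem, hμrad⟩ := spectrum.exists_nnnorm_eq_spectralRadius (a := M)
    -- specRad X = ‖μ‖
    have hle : ∀ z ∈ spectrum ℂ M, ‖z‖ ≤ ‖μ‖ := by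
      intro z hz
      have h := le_iSup₂ (f := fun k (_ : k ∈ spectrum ℂ M) => (‖k‖₊ : ℝ≥0∞)) z hz
      rw [← spectralRadius] at h
      rw [← hμrad, ENNReal.coe_le_coe] at h
      exact h
    have hrad : specRad X = ‖μ‖ := by
      apply le_antisymm
      · exact Real.sSup_le (by rintro x ⟨z, hz, rfl⟩; exact hle z hz) (norm_nonneg μ)
      · exact le_csSup ⟨‖μ‖, by rintro x ⟨z, hz, rfl⟩; exact hle z hz⟩ ⟨μ, hμmem, rfl⟩
    -- eigenvector for μ
    have hnu : ¬ IsUnit (algebraMap ℂ (Matrix (Fin n) (Fin n) ℂ) μ - M) :=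
      spectrum.mem_iff.mp hμmem
    have hdet : (algebraMap ℂ (Matrix (Fin n) (Fin n) ℂ) μ - M).det = 0 := by
      by_contra h
      exact hnu ((Matrix.isUnit_iff_isUnit_det _).mpr (isUnit_iff_ne_zero.mpr h))
    obtain ⟨v, hv0, hv⟩ := (Matrix.exists_mulVec_eq_zero_iff).mpr hdet
    have hvE : M.mulVec v = μ • v := by
      rw [Matrix.sub_mulVec, Algebra.algebraMap_eq_smul_one, Matrix.smul_mulVec,
        Matrix.one_mulVec, sub_eq_zero] at hv
      exact hv.symm
    -- the nonnegative vector u = ‖v‖ componentwise witnesses that ‖μ‖ ∈ S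
    have hμS : ‖μ‖ ∈ S := by
      refine ⟨norm_nonneg μ, fun i => ‖v i‖, fun i => norm_nonneg _, ?_, ?_⟩
      · intro h
        apply hv0
        funext i
        have := congrFun h i
        simpa using norm_eq_zero.mp this
      · intro i
        have h1 : ‖μ‖ * ‖v i‖ = ‖(M.mulVec v) i‖ := by
          rw [hvE]; simp [norm_smul]
        rw [h1]
        have h2 : (M.mulVec v) i = ∑ j, M i j * v j := by
          simp [Matrix.mulVec, dotProduct]
        rw [h2]
        calc ‖∑ j, M i j * v j‖ ≤ ∑ j, ‖M i j * v j‖ := norm_sum_le _ _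
          _ = ∑ j, X i j * ‖v j‖ := by
              apply Finset.sum_congr rfl
              intro j _
              rw [norm_mul]
              congr 1
              simp [hM, Matrix.map_apply, abs_of_nonneg (hX i j)]
          _ = X.mulVec (fun j => ‖v j‖) i := by
              simp [Matrix.mulVec, dotProduct]
    -- every element of S is ≤ ‖μ‖
    have hub : ∀ lam ∈ S, lam ≤ ‖μ‖ := by
      rintro lam ⟨hlam0, u, hu0, hu, hlu⟩
      -- iterate: lam^k * u ≤ (X^k) u
      have hk : ∀ k : ℕ, ∀ i, lam ^ k * u i ≤ (X ^ k).mulVec u i := by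
        intro k
        induction k with
        | zero => intro i; simp [Matrix.one_mulVec]
        | succ k ih =>
          intro i
          have h1 : lam ^ (k+1) * u i = lam ^ k * (lam * u i) := by ring
          have h2 : lam ^ k * (lam * u i) ≤ lam ^ k * (X.mulVec u i) :=
            mul_le_mul_of_nonneg_left (hlu i) (pow_nonneg hlam0 k)
          calc lam ^ (k+1) * u i = lam * (lam ^ k * u i) := by ring
            _ ≤ lam * ((X ^ k).mulVec u i) :=
                mul_le_mul_of_nonneg_left (ih i) hlam0
            _ = (X ^ k).mulVec (lam • u) i := by
                rw [Matrix.mulVec_smul]; simp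
            _ ≤ (X ^ k).mulVec (X.mulVec u) i := by
                refine mulVec_mono _ (pow_entries_nonneg X hX k) (fun j => ?_) i
                simpa using hlu j
            _ = (X ^ (k+1)).mulVec u i := by
                rw [pow_succ, ← Matrix.mulVec_mulVec]
      -- pick index attaining the sup norm of u
      obtain ⟨i₀, hi₀⟩ : ∃ i₀, ‖u‖ = u i₀ := by
        obtain ⟨i₀, -, hmax⟩ := Finset.exists_max_image Finset.univ u Finset.univ_nonempty
        refine ⟨i₀, le_antisymm ?_ ?_⟩
        · refine (pi_norm_le_iff_of_nonneg (hu0 i₀)).mpr fun i => ?_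
          rw [Real.norm_eq_abs, abs_of_nonneg (hu0 i)]
          exact hmax i (Finset.mem_univ i)
        · exact le_trans (le_abs_self _) ((Real.norm_eq_abs _) ▸ norm_le_pi_norm u i₀)
      have hupos : 0 < ‖u‖ := norm_pos_iff.mpr hu
      have hnorm : ∀ k : ℕ, lam ^ k ≤ ‖M ^ k‖ := by
        intro k
        have h1 : lam ^ k * ‖u‖ ≤ ‖X ^ k‖ * ‖u‖ := by
          calc lam ^ k * ‖u‖ = lam ^ k * u i₀ := by rw [hi₀]
            _ ≤ (X ^ k).mulVec u i₀ := hk k i₀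
            _ ≤ ‖(X ^ k).mulVec u‖ := by
                refine le_trans (le_abs_self _) ?_
                exact (Real.norm_eq_abs _) ▸ norm_le_pi_norm _ i₀
            _ ≤ ‖X ^ k‖ * ‖u‖ := Matrix.linfty_opNorm_mulVec _ _
        have h2 := le_of_mul_le_mul_right h1 hupos
        rwa [map_pow_eq, map_norm_eq] at *
      -- Gelfand's formula
      have hg := spectrum.pow_nnnorm_pow_one_div_tendsto_nhds_spectralRadius M
      have hlim : (lam.toNNReal : ℝ≥0∞) ≤ spectralRadius ℂ M := by
        refine ge_of_tendsto hg ?_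
        filter_upwards [Filter.eventually_ge_atTop 1] with k hk1
        have hk0 : (k : ℝ) ≠ 0 := by positivity
        have h1 : (lam.toNNReal : ℝ≥0∞) ^ (k : ℕ) ≤ (‖M ^ k‖₊ : ℝ≥0∞) := by
          rw [← ENNReal.coe_pow, ENNReal.coe_le_coe, ← Real.toNNReal_pow hlam0]
          exact Real.toNNReal_le_iff_le_coe.mpr ((by rw [coe_nnnorm]; exact hnorm k))
        calc (lam.toNNReal : ℝ≥0∞) = ((lam.toNNReal : ℝ≥0∞) ^ (k:ℕ)) ^ (1 / (k:ℝ)) := by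
              rw [← ENNReal.rpow_natCast, ← ENNReal.rpow_mul, mul_one_div,
                div_self hk0, ENNReal.rpow_one]
          _ ≤ (‖M ^ k‖₊ : ℝ≥0∞) ^ (1 / (k:ℝ)) := by
              exact ENNReal.rpow_le_rpow h1 (by positivity)
      rw [← hμrad, ENNReal.coe_le_coe] at hlim
      calc lam ≤ (lam.toNNReal : ℝ) := Real.le_coe_toNNReal lam
        _ ≤ ‖μ‖ := hlim
    rw [hrad]
    exact le_antisymm (le_csSup ⟨‖μ‖, hub⟩ hμS) (Real.sSup_le hub (norm_nonneg μ))
end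

section
/- For any Boolean row vector A_i, natural number r, and nonnegative vector v, the minimum of ⟨x, v⟩ over the set B(A_i, r) = {x ≥ 0 : ‖A_i − x‖₁ ≤ r} equals the sum of v_j over supp A_i minus the sum of the r largest values v_j for j ∈ supp A_i (or equals 0 if |supp A_i| ≤ r). -/
open scoped Classical

private lemma key_aux {n : ℕ} (S : Finset (Fin n)) (v : Fin n → ℝ) (hv : ∀ j, 0 ≤ v j)
    (r : ℕ) (J : Finset (Fin n)) (hJS : J ⊆ S) (hJcard : J.card = min r S.card)
    (hJmax : ∀ J' ⊆ S, J'.card = min r S.card → ∑ j ∈ J', v j ≤ ∑ j ∈ J, v j)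
    (w : Fin n → ℝ) (hw0 : ∀ j, 0 ≤ w j) (hw1 : ∀ j, w j ≤ 1)
    (hwr : ∑ j ∈ S, w j ≤ (r : ℝ)) :
    ∑ j ∈ S, w j * v j ≤ ∑ j ∈ J, v j := by
  rcases le_or_gt S.card r with h | h
  · have hJ : J = S := Finset.eq_of_subset_of_card_le hJS
      (by rw [hJcard, min_eq_right h])
    subst hJ
    apply Finset.sum_le_sum
    intro j _
    nlinarith [hv j, hw0 j, hw1 j]
  · have hk : min r S.card = r := min_eq_left h.le
    rcases Nat.eq_zero_or_pos r with hr | hr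
    · subst hr
      have hz : ∀ j ∈ S, w j = 0 := by
        have hle : ∑ j ∈ S, w j = 0 :=
          le_antisymm (by simpa using hwr) (Finset.sum_nonneg fun j _ => hw0 j)
        exact fun j hj => (Finset.sum_eq_zero_iff_of_nonneg (fun j _ => hw0 j)).mp hle j hj
      rw [Finset.sum_eq_zero (fun j hj => by rw [hz j hj, zero_mul])]
      exact Finset.sum_nonneg fun j _ => hv j
    · have hJne : J.Nonempty := Finset.card_pos.mp (by rw [hJcard, hk]; exact hr)
      obtain ⟨j0, hj0J, hj0min⟩ := Finset.exists_min_image J v hJne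
      have hm0 : 0 ≤ v j0 := hv j0
      have hout : ∀ i ∈ S \ J, v i ≤ v j0 := by
        intro i hi
        by_contra hlt
        push_neg at hlt
        have hiS := (Finset.mem_sdiff.mp hi).1
        have hiJ := (Finset.mem_sdiff.mp hi).2
        have hiE : i ∉ J.erase j0 := fun hc => hiJ (Finset.erase_subset _ _ hc)
        have h1 : insert i (J.erase j0) ⊆ S := by
          intro x hx
          rcases Finset.mem_insert.mp hx with rfl | hx
          · exact hiS
          · exact hJS (Finset.erase_subset _ _ hx)
        have h2 : (insert i (J.erase j0)).card = min r S.card := by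
          rw [Finset.card_insert_of_notMem hiE, Finset.card_erase_of_mem hj0J, hJcard, hk]
          omega
        have h3 := hJmax _ h1 h2
        rw [Finset.sum_insert hiE, Finset.sum_erase_eq_sub hj0J] at h3
        linarith
      have hsplit : ∑ j ∈ S \ J, w j * v j + ∑ j ∈ J, w j * v j = ∑ j ∈ S, w j * v j :=
        Finset.sum_sdiff hJS
      have hsum : ∑ j ∈ S \ J, w j + ∑ j ∈ J, w j = ∑ j ∈ S, w j :=
        Finset.sum_sdiff hJS
      have hA : ∑ j ∈ J, w j * v j ≤ ∑ j ∈ J, v j - v j0 * ((r : ℝ) - ∑ j ∈ J, w j) := by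
        have hstep : ∀ j ∈ J, w j * v j ≤ v j - (1 - w j) * v j0 := by
          intro j hj
          nlinarith [hj0min j hj, hw1 j, hm0]
        calc ∑ j ∈ J, w j * v j ≤ ∑ j ∈ J, (v j - (1 - w j) * v j0) :=
              Finset.sum_le_sum hstep
          _ = ∑ j ∈ J, v j - v j0 * ((J.card : ℝ) - ∑ j ∈ J, w j) := by
              rw [Finset.sum_sub_distrib, ← Finset.sum_mul, Finset.sum_sub_distrib,
                Finset.sum_const, nsmul_eq_mul, mul_one]
              ring
          _ = ∑ j ∈ J, v j - v j0 * ((r : ℝ) - ∑ j ∈ J, w j) := by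
              rw [hJcard, hk]
      have hB : ∑ j ∈ S \ J, w j * v j ≤ v j0 * ∑ j ∈ S \ J, w j := by
        rw [Finset.mul_sum]
        apply Finset.sum_le_sum
        intro j hj
        nlinarith [hout j hj, hw0 j]
      nlinarith [hm0, hwr]

/-- The minimal value of `⟨y, v⟩` over the truncated `L¹`-ball
`B(a, r) = { y ≥ 0 : ‖a - y‖₁ ≤ r }` around a Boolean row `a`, for `v ≥ 0`,
equals the sum of `v j` over `supp a` minus the sum of the
`min r |supp a|` largest values of `v` on `supp a`
(in particular it equals `0` when `|supp a| ≤ r`). -/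
theorem stmt12 {n : ℕ} (a : Fin n → ℝ) (ha : ∀ j, a j = 0 ∨ a j = 1) (r : ℕ)
    (v : Fin n → ℝ) (hv : ∀ j, 0 ≤ v j) :
    sInf {t : ℝ | ∃ y : Fin n → ℝ, (∀ j, 0 ≤ y j) ∧
        (∑ j, |a j - y j|) ≤ (r : ℝ) ∧ t = ∑ j, y j * v j} =
    (∑ j ∈ Finset.univ.filter fun j => a j ≠ 0, v j) -
      sSup {s : ℝ | ∃ J ⊆ (Finset.univ.filter fun j => a j ≠ 0),
        J.card = min r (Finset.univ.filter fun j => a j ≠ 0).card ∧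
        s = ∑ j ∈ J, v j} := by
  set S : Finset (Fin n) := Finset.univ.filter fun j => a j ≠ 0 with hS
  have haS : ∀ j ∈ S, a j = 1 := by
    intro j hj
    rcases ha j with h | h
    · exfalso; rw [hS] at hj; simp [h] at hj
    · exact h
  have haS' : ∀ j, j ∉ S → a j = 0 := by
    intro j hj
    by_contra h
    exact hj (by rw [hS]; simp [h])
  -- the maximizing subset J
  obtain ⟨J, hJmem, hJmax⟩ := Finset.exists_max_image
    (S.powerset.filter fun J => J.card = min r S.card) (fun J => ∑ j ∈ J, v j)
    (by
      obtain ⟨J, hJ, hJc⟩ := Finset.exists_subset_card_eq (min_le_right r S.card)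
      exact ⟨J, by simp [Finset.mem_filter, Finset.mem_powerset, hJ, hJc]⟩)
  have hJS : J ⊆ S := Finset.mem_powerset.mp (Finset.mem_filter.mp hJmem).1
  have hJcard : J.card = min r S.card := (Finset.mem_filter.mp hJmem).2
  have hJmax' : ∀ J' ⊆ S, J'.card = min r S.card → ∑ j ∈ J', v j ≤ ∑ j ∈ J, v j := by
    intro J' h1 h2
    exact hJmax J' (by simp [Finset.mem_filter, Finset.mem_powerset, h1, h2])
  -- compute the sSup
  have hSup : sSup {s : ℝ | ∃ J' ⊆ S, J'.card = min r S.card ∧ s = ∑ j ∈ J', v j} =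
      ∑ j ∈ J, v j := by
    apply le_antisymm
    · refine csSup_le ⟨_, J, hJS, hJcard, rfl⟩ ?_
      rintro s ⟨J', hJ', hc', rfl⟩
      exact hJmax' J' hJ' hc'
    · apply le_csSup
      · apply Set.Finite.bddAbove
        apply Set.Finite.subset (Finset.finite_toSet
          ((S.powerset.filter fun J => J.card = min r S.card).image fun J => ∑ j ∈ J, v j))
        rintro s ⟨J', hJ', hc', rfl⟩
        simp only [Finset.coe_image, Set.mem_image, Finset.mem_coe, Finset.mem_filter,
          Finset.mem_powerset]
        exact ⟨J', ⟨hJ', hc'⟩, rfl⟩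
      · exact ⟨J, hJS, hJcard, rfl⟩
  rw [hSup]
  -- the witness y
  set y0 : Fin n → ℝ := fun j => if j ∈ S \ J then 1 else 0 with hy0
  have hy0mem : (∑ j, y0 j * v j) ∈ {t : ℝ | ∃ y : Fin n → ℝ, (∀ j, 0 ≤ y j) ∧
      (∑ j, |a j - y j|) ≤ (r : ℝ) ∧ t = ∑ j, y j * v j} := by
    refine ⟨y0, fun j => by rw [hy0]; positivity, ?_, rfl⟩
    have : ∑ j, |a j - y0 j| = ∑ j, (if j ∈ J then (1:ℝ) else 0) := by
      apply Finset.sum_congr rfl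
      intro j _
      by_cases hj : j ∈ S
      · by_cases hj2 : j ∈ J
        · have : j ∉ S \ J := by simp [hj2]
          simp [hy0, this, hj2, haS j hj]
        · have : j ∈ S \ J := Finset.mem_sdiff.mpr ⟨hj, hj2⟩
          simp [hy0, this, hj2, hj, haS j hj]
      · have h1 : j ∉ S \ J := fun hc => hj (Finset.mem_sdiff.mp hc).1
        have h2 : j ∉ J := fun hc => hj (hJS hc)
        simp [hy0, h1, h2, hj, haS' j hj]
    rw [this, Finset.sum_ite_mem, Finset.univ_inter, Finset.sum_const, nsmul_eq_mul, mul_one,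
      hJcard]
    exact_mod_cast Nat.cast_le.mpr (min_le_left r S.card)
  have hy0val : ∑ j, y0 j * v j = ∑ j ∈ S, v j - ∑ j ∈ J, v j := by
    have : ∑ j, y0 j * v j = ∑ j ∈ S \ J, v j := by
      rw [hy0]
      rw [show (∑ j, (if j ∈ S \ J then (1:ℝ) else 0) * v j)
          = ∑ j, (if j ∈ S \ J then v j else 0) by
        apply Finset.sum_congr rfl; intro j _; split <;> simp]
      rw [Finset.sum_ite_mem, Finset.univ_inter]
    rw [this, ← Finset.sum_sdiff hJS]
    ring
  apply le_antisymm
  · -- sInf ≤ value, via witness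
    rw [← hy0val]
    apply csInf_le
    · refine ⟨0, ?_⟩
      rintro t ⟨y, hy, _, rfl⟩
      exact Finset.sum_nonneg fun j _ => mul_nonneg (hy j) (hv j)
    · exact hy0mem
  · -- value ≤ sInf
    apply le_csInf ⟨_, hy0mem⟩
    rintro t ⟨y, hy, hyr, rfl⟩
    set w : Fin n → ℝ := fun j => max 0 (1 - y j) with hw
    have hw0 : ∀ j, 0 ≤ w j := fun j => le_max_left _ _
    have hw1 : ∀ j, w j ≤ 1 := fun j => max_le (by norm_num) (by linarith [hy j])
    have hwr : ∑ j ∈ S, w j ≤ (r : ℝ) := by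
      calc ∑ j ∈ S, w j ≤ ∑ j ∈ S, |a j - y j| := by
            apply Finset.sum_le_sum
            intro j hj
            rw [haS j hj, hw]
            exact max_le (abs_nonneg _) (le_abs_self _)
        _ ≤ ∑ j, |a j - y j| :=
            Finset.sum_le_sum_of_subset_of_nonneg (Finset.subset_univ S)
              (fun j _ _ => abs_nonneg _)
        _ ≤ (r : ℝ) := hyr
    have hkey := key_aux S v hv r J hJS hJcard hJmax' w hw0 hw1 hwr
    have h2 : ∑ j ∈ S, (1 - w j) * v j ≤ ∑ j, y j * v j := by
      calc ∑ j ∈ S, (1 - w j) * v j ≤ ∑ j ∈ S, y j * v j := by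
            apply Finset.sum_le_sum
            intro j _
            have : 1 - w j ≤ y j := by
              have := le_max_right (0:ℝ) (1 - y j)
              rw [hw]; dsimp only; linarith
            exact mul_le_mul_of_nonneg_right this (hv j)
        _ ≤ ∑ j, y j * v j :=
            Finset.sum_le_sum_of_subset_of_nonneg (Finset.subset_univ S)
              (fun j _ _ => mul_nonneg (hy j) (hv j))
    have h3 : ∑ j ∈ S, (1 - w j) * v j = ∑ j ∈ S, v j - ∑ j ∈ S, w j * v j := by
      rw [show (∑ j ∈ S, (1 - w j) * v j) = ∑ j ∈ S, (v j - w j * v j) by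
        apply Finset.sum_congr rfl; intro j _; ring]
      rw [Finset.sum_sub_distrib]
    linarith
end

section
/- If a nonnegative matrix A (in Frobenius normal form with irreducible diagonal blocks A_1,…,A_q) has a strictly positive minimal leading eigenvector, then ρ(A_q) = ρ(A) and ρ(A_j) < ρ(A) for all j < q. -/
/-- The principal submatrix of `B` indexed by `S` is irreducible. -/
def IrreducibleOn {n : ℕ} (B : Matrix (Fin n) (Fin n) ℝ) (S : Set (Fin n)) : Prop :=
  ¬ ∃ Λ : Set (Fin n), Λ ⊆ S ∧ Λ.Nonempty ∧ Λ ≠ S ∧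
      ∀ i ∈ S \ Λ, ∀ j ∈ Λ, B i j = 0

/-- The diagonal block of `A` on the level set `{i | blk i = k}`. -/
def diagBlock {n q : ℕ} (A : Matrix (Fin n) (Fin n) ℝ) (blk : Fin n → Fin (q + 1))
    (k : Fin (q + 1)) : Matrix {i : Fin n // blk i = k} {i : Fin n // blk i = k} ℝ :=
  A.submatrix (fun i => (i : Fin n)) (fun i => (i : Fin n))




open Matrix in
lemma spec_iff_eigen {m : Type*} [Fintype m] [DecidableEq m] (M : Matrix m m ℂ) (μ : ℂ) :
    μ ∈ spectrum ℂ M ↔ ∃ z : m → ℂ, z ≠ 0 ∧ M.mulVec z = μ • z := by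
  rw [spectrum.mem_iff, Matrix.isUnit_iff_isUnit_det, isUnit_iff_ne_zero, not_not,
      ← Matrix.exists_mulVec_eq_zero_iff]
  constructor
  · rintro ⟨z, hz, h⟩
    refine ⟨z, hz, ?_⟩
    rw [Matrix.sub_mulVec, sub_eq_zero, Algebra.algebraMap_eq_smul_one,
      Matrix.smul_mulVec, Matrix.one_mulVec] at h
    exact h.symm
  · rintro ⟨z, hz, h⟩
    refine ⟨z, hz, ?_⟩
    rw [Matrix.sub_mulVec, sub_eq_zero, Algebra.algebraMap_eq_smul_one,
      Matrix.smul_mulVec, Matrix.one_mulVec]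
    exact h.symm

lemma norm_le_of_subinv {m : Type*} [Fintype m] [DecidableEq m] (B : Matrix m m ℝ)
    (hB : ∀ i j, 0 ≤ B i j) (x : m → ℝ) (hx : ∀ i, 0 < x i) (lam : ℝ)
    (hle : ∀ i, ∑ j, B i j * x j ≤ lam * x i)
    (μ : ℂ) (hμ : μ ∈ spectrum ℂ (B.map (algebraMap ℝ ℂ))) :
    ‖μ‖ ≤ lam ∧ (‖μ‖ = lam →
       ∃ Λ : Set m, Λ.Nonempty ∧ (∀ i ∈ Λ, ∑ j, B i j * x j = lam * x i) ∧
         (∀ i ∈ Λ, ∀ j, j ∉ Λ → B i j = 0)) := by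
  obtain ⟨z, hz, heig⟩ := (spec_iff_eigen _ μ).mp hμ
  obtain ⟨j₀, hj₀⟩ := Function.ne_iff.mp hz
  have : Nonempty m := ⟨j₀⟩
  -- argmax of ‖z i‖ / x i
  obtain ⟨i₀, -, hi₀⟩ := Finset.exists_max_image Finset.univ (fun i => ‖z i‖ / x i)
    ⟨j₀, Finset.mem_univ _⟩
  set c : ℝ := ‖z i₀‖ / x i₀ with hc
  have hcle : ∀ j, ‖z j‖ ≤ c * x j := by
    intro j
    have := hi₀ j (Finset.mem_univ j)
    rw [div_le_iff₀ (hx j)] at this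
    linarith [this]
  have hcpos : 0 < c := by
    have h1 : 0 < ‖z j₀‖ / x j₀ := div_pos (norm_pos_iff.mpr hj₀) (hx j₀)
    exact lt_of_lt_of_le h1 (hi₀ j₀ (Finset.mem_univ j₀))
  have hzi₀ : ‖z i₀‖ = c * x i₀ := by
    rw [hc, div_mul_cancel₀]
    exact (hx i₀).ne'
  -- coordinate form of eigen equation
  have hcoord : ∀ i, μ * z i = ∑ j, (B i j : ℂ) * z j := by
    intro i
    have := congrFun heig i
    simp only [Matrix.mulVec, dotProduct, Pi.smul_apply, smul_eq_mul,
      Matrix.map_apply] at this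
    exact this.symm
  have h1 : ∀ i, ‖μ‖ * ‖z i‖ ≤ ∑ j, B i j * ‖z j‖ := by
    intro i
    calc ‖μ‖ * ‖z i‖ = ‖μ * z i‖ := (norm_mul _ _).symm
      _ = ‖∑ j, (B i j : ℂ) * z j‖ := by rw [hcoord i]
      _ ≤ ∑ j, ‖(B i j : ℂ) * z j‖ := norm_sum_le _ _
      _ = ∑ j, B i j * ‖z j‖ := by
          refine Finset.sum_congr rfl fun j _ => ?_
          rw [norm_mul, Complex.norm_real, Real.norm_of_nonneg (hB i j)]
  have h2 : ∀ i, ∑ j, B i j * ‖z j‖ ≤ c * (lam * x i) := by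
    intro i
    calc ∑ j, B i j * ‖z j‖ ≤ ∑ j, B i j * (c * x j) :=
          Finset.sum_le_sum fun j _ => mul_le_mul_of_nonneg_left (hcle j) (hB i j)
      _ = c * ∑ j, B i j * x j := by rw [Finset.mul_sum]; exact Finset.sum_congr rfl fun j _ => by ring
      _ ≤ c * (lam * x i) := mul_le_mul_of_nonneg_left (hle i) hcpos.le
  have hmule : ‖μ‖ ≤ lam := by
    have h := (h1 i₀).trans (h2 i₀)
    rw [hzi₀] at h
    have h' : ‖μ‖ * (c * x i₀) ≤ lam * (c * x i₀) := by linarith [h, mul_comm c (lam * x i₀)]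
    exact le_of_mul_le_mul_right h' (mul_pos hcpos (hx i₀))
  refine ⟨hmule, fun heq => ?_⟩
  refine ⟨{i | ‖z i‖ = c * x i}, ⟨i₀, hzi₀⟩, ?_, ?_⟩
  · intro i hi
    have key : lam * (c * x i) ≤ c * (lam * x i) := by
      have := (h1 i).trans (h2 i)
      rw [Set.mem_setOf_eq.mp hi, heq] at this
      exact this
    have h2i := h2 i
    have h1i := h1 i
    rw [Set.mem_setOf_eq.mp hi, heq] at h1i
    -- lam * (c * x i) ≤ ∑ B i j ‖z j‖ ≤ c * ∑ B i j x j ≤ c * lam * x i  and ends equal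
    have hsum1 : ∑ j, B i j * ‖z j‖ ≤ c * ∑ j, B i j * x j := by
      calc ∑ j, B i j * ‖z j‖ ≤ ∑ j, B i j * (c * x j) :=
            Finset.sum_le_sum fun j _ => mul_le_mul_of_nonneg_left (hcle j) (hB i j)
        _ = c * ∑ j, B i j * x j := by rw [Finset.mul_sum]; exact Finset.sum_congr rfl fun j _ => by ring
    have hsum2 : c * ∑ j, B i j * x j ≤ c * (lam * x i) :=
      mul_le_mul_of_nonneg_left (hle i) hcpos.le
    have : c * ∑ j, B i j * x j = c * (lam * x i) := le_antisymm hsum2 (by nlinarith)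
    have := mul_left_cancel₀ hcpos.ne' this
    linarith [this]
  · intro i hi j hj
    by_contra hBij
    have hBijpos : 0 < B i j := lt_of_le_of_ne (hB i j) (Ne.symm hBij)
    have hzj : ‖z j‖ < c * x j := lt_of_le_of_ne (hcle j) hj
    -- then ∑ B i j ‖z j‖ < c ∑ B i j x j, contradicting equality chain
    have hstrict : ∑ l, B i l * ‖z l‖ < ∑ l, B i l * (c * x l) := by
      apply Finset.sum_lt_sum
      · exact fun l _ => mul_le_mul_of_nonneg_left (hcle l) (hB i l)
      · exact ⟨j, Finset.mem_univ j, mul_lt_mul_of_pos_left hzj hBijpos⟩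
    have h1i := h1 i
    rw [Set.mem_setOf_eq.mp hi, heq] at h1i
    have heqsum : ∑ l, B i l * (c * x l) = c * ∑ l, B i l * x l := by
      rw [Finset.mul_sum]; exact Finset.sum_congr rfl fun l _ => by ring
    have hsum2 : c * ∑ l, B i l * x l ≤ c * (lam * x i) :=
      mul_le_mul_of_nonneg_left (hle i) hcpos.le
    rw [heqsum] at hstrict
    nlinarith

lemma real_mem_spec {m : Type*} [Fintype m] [DecidableEq m] (B : Matrix m m ℝ)
    (x : m → ℝ) (hx : x ≠ 0) (lam : ℝ) (heig : ∀ i, ∑ j, B i j * x j = lam * x i) :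
    (lam : ℂ) ∈ spectrum ℂ (B.map (algebraMap ℝ ℂ)) := by
  rw [spec_iff_eigen]
  refine ⟨fun i => (x i : ℂ), ?_, ?_⟩
  · intro h
    apply hx
    funext i
    have := congrFun h i
    simpa using this
  · funext i
    simp only [Matrix.mulVec, dotProduct, Matrix.map_apply, Pi.smul_apply, smul_eq_mul]
    rw [show ((algebraMap ℝ ℂ) : ℝ → ℂ) = fun r : ℝ => (r : ℂ) from rfl]
    have h : ((∑ j, B i j * x j : ℝ) : ℂ) = ((lam * x i : ℝ) : ℂ) := by
      exact_mod_cast congrArg (fun r : ℝ => (r : ℂ)) (heig i)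
    push_cast at h
    exact h

lemma specRad_le_of_subinv {m : Type*} [Fintype m] [DecidableEq m] (B : Matrix m m ℝ)
    (hB : ∀ i j, 0 ≤ B i j) (x : m → ℝ) (hx : ∀ i, 0 < x i) (lam : ℝ) (hlam : 0 ≤ lam)
    (hle : ∀ i, ∑ j, B i j * x j ≤ lam * x i) : specRad B ≤ lam := by
  apply Real.sSup_le _ hlam
  rintro r ⟨μ, hμ, rfl⟩
  exact (norm_le_of_subinv B hB x hx lam hle μ hμ).1

lemma specRad_eq_of_eig {m : Type*} [Fintype m] [DecidableEq m] [Nonempty m]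
    (B : Matrix m m ℝ) (hB : ∀ i j, 0 ≤ B i j) (x : m → ℝ) (hx : ∀ i, 0 < x i) (lam : ℝ)
    (heig : ∀ i, ∑ j, B i j * x j = lam * x i) : specRad B = lam := by
  have hlam : 0 ≤ lam := by
    obtain ⟨i⟩ := ‹Nonempty m›
    have h := heig i
    have : 0 ≤ ∑ j, B i j * x j := Finset.sum_nonneg fun j _ => mul_nonneg (hB i j) (hx j).le
    nlinarith [hx i]
  refine le_antisymm (specRad_le_of_subinv B hB x hx lam hlam fun i => (heig i).le) ?_
  have hmem : (lam : ℂ) ∈ spectrum ℂ (B.map (algebraMap ℝ ℂ)) :=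
    real_mem_spec B x (by intro h; obtain ⟨i⟩ := ‹Nonempty m›; exact (hx i).ne' (congrFun h i)) lam heig
  have : lam = ‖(lam : ℂ)‖ := by
    rw [Complex.norm_real, Real.norm_of_nonneg hlam]
  rw [this]
  apply le_csSup
  · refine ⟨lam, ?_⟩
    rintro r ⟨μ, hμ, rfl⟩
    exact (norm_le_of_subinv B hB x hx lam (fun i => (heig i).le) μ hμ).1
  · exact ⟨(lam : ℂ), hmem, rfl⟩

lemma specRad_lt_of_subinv {m : Type*} [Fintype m] [DecidableEq m]
    (B : Matrix m m ℝ) (hB : ∀ i j, 0 ≤ B i j) (x : m → ℝ) (hx : ∀ i, 0 < x i) (lam : ℝ)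
    (hle : ∀ i, ∑ j, B i j * x j ≤ lam * x i)
    (i₁ : m) (hstrict : ∑ j, B i₁ j * x j < lam * x i₁)
    (hconn : ∀ Λ : Set m, Λ.Nonempty → Λ ≠ Set.univ → ¬(∀ i ∈ Λ, ∀ j, j ∉ Λ → B i j = 0)) :
    specRad B < lam := by
  have hlampos : 0 < lam := by
    have h0 : 0 ≤ ∑ j, B i₁ j * x j := Finset.sum_nonneg fun j _ => mul_nonneg (hB i₁ j) (hx j).le
    nlinarith [hx i₁]
  have key : ∀ μ ∈ spectrum ℂ (B.map (algebraMap ℝ ℂ)), ‖μ‖ < lam := by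
    intro μ hμ
    obtain ⟨h1, h2⟩ := norm_le_of_subinv B hB x hx lam hle μ hμ
    rcases lt_or_eq_of_le h1 with h | h
    · exact h
    · exfalso
      obtain ⟨Λ, hΛne, hΛeq, hΛzero⟩ := h2 h
      have hΛnuniv : Λ ≠ Set.univ := by
        intro hu
        have := hΛeq i₁ (hu ▸ Set.mem_univ i₁)
        exact absurd this (ne_of_lt hstrict)
      exact hconn Λ hΛne hΛnuniv hΛzero
  set T := (fun μ : ℂ => ‖μ‖) '' spectrum ℂ (B.map (algebraMap ℝ ℂ)) with hT
  rcases T.eq_empty_or_nonempty with h | h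
  · rw [specRad, ← hT, h, Real.sSup_empty]; exact hlampos
  · have hfin : T.Finite := (Matrix.finite_spectrum _).image _
    have hmem : sSup T ∈ T := Set.Nonempty.csSup_mem h hfin
    obtain ⟨μ, hμ, hval⟩ := hmem
    rw [specRad, ← hT, ← hval]
    exact key μ hμ


open Filter Topology

/-- Let `A ≥ 0` be in Frobenius normal form: the index set is partitioned into
consecutive blocks (the level sets of a monotone surjective labelling `blk`),
entries below the block diagonal vanish, and each diagonal block is
irreducible.  If `A` has a strictly positive minimal leading eigenvector, then
the last diagonal block satisfies `ρ(A_q) = ρ(A)` while all earlier diagonal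
blocks satisfy `ρ(A_j) < ρ(A)`. -/
theorem stmt16 {n q : ℕ} (A : Matrix (Fin n) (Fin n) ℝ) (hA : ∀ i j, 0 ≤ A i j)
    (blk : Fin n → Fin (q + 1)) (hmono : Monotone blk)
    (hsurj : Function.Surjective blk)
    (htri : ∀ i j, blk j < blk i → A i j = 0)
    (hirr : ∀ k, IrreducibleOn A {i | blk i = k})
    (v : Fin n → ℝ) (hvpos : ∀ i, 0 < v i)
    (hveig : A.mulVec v = specRad A • v)
    (hminimal : ¬ ∃ w : Fin n → ℝ, (∀ i, 0 ≤ w i) ∧ w ≠ 0 ∧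
        A.mulVec w = specRad A • w ∧ {i | w i ≠ 0} ⊂ {i | v i ≠ 0}) :
    specRad (diagBlock A blk (Fin.last q)) = specRad A ∧
    ∀ k : Fin (q + 1), k ≠ Fin.last q →
      specRad (diagBlock A blk k) < specRad A := by
  set ρ : ℝ := specRad A with hρdef
  obtain ⟨i00, hi00⟩ := hsurj 0
  have hne : Nonempty (Fin n) := ⟨i00⟩
  have hrow : ∀ i, ∑ j, A i j * v j = ρ * v i := by
    intro i
    have h := congrFun hveig i
    simpa [Matrix.mulVec, dotProduct] using h
  have hρ0 : 0 ≤ ρ := by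
    have h := hrow i00
    have h0 : 0 ≤ ∑ j, A i00 j * v j :=
      Finset.sum_nonneg fun j _ => mul_nonneg (hA i00 j) (hvpos j).le
    nlinarith [hvpos i00]
  -- subtype sums as filtered sums
  have hsub : ∀ (k : Fin (q+1)) (i : Fin n),
      (∑ j : {j : Fin n // blk j = k}, A i j.1 * v j.1)
        = ∑ j ∈ Finset.univ.filter (fun j => blk j = k), A i j * v j := by
    intro k i
    exact (Finset.sum_subtype _ (by simp) (fun j => A i j * v j)).symm
  constructor
  · -- last block
    obtain ⟨i0, hi0⟩ := hsurj (Fin.last q)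
    have : Nonempty {i : Fin n // blk i = Fin.last q} := ⟨⟨i0, hi0⟩⟩
    apply specRad_eq_of_eig _ (fun i j => hA _ _)
      (fun i : {i : Fin n // blk i = Fin.last q} => v i.1) (fun i => hvpos _) ρ
    intro i
    show (∑ j : {j : Fin n // blk j = Fin.last q}, A i.1 j.1 * v j.1) = ρ * v i.1
    rw [hsub]
    have h2 : ∑ j ∈ Finset.univ.filter (fun j => ¬ blk j = Fin.last q), A i.1 j * v j = 0 := by
      apply Finset.sum_eq_zero
      intro j hj
      simp only [Finset.mem_filter, Finset.mem_univ, true_and] at hj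
      have hlt : blk j < blk i.1 := by
        rw [i.2]
        exact lt_of_le_of_ne (Fin.le_last _) hj
      rw [htri _ _ hlt, zero_mul]
    have htot := Finset.sum_filter_add_sum_filter_not Finset.univ
      (fun j => blk j = Fin.last q) (fun j => A i.1 j * v j)
    rw [h2, add_zero] at htot
    rw [htot, hrow i.1]
  · -- earlier blocks
    intro k hk
    obtain ⟨ik, hik⟩ := hsurj k
    have hKne : Nonempty {i : Fin n // blk i = k} := ⟨⟨ik, hik⟩⟩
    have hklt : k < Fin.last q := lt_of_le_of_ne (Fin.le_last k) hk
    obtain ⟨il, hil⟩ := hsurj (Fin.last q)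
    have hilk : blk il ≠ k := by rw [hil]; exact hklt.ne'
    have hle : ∀ i : {i : Fin n // blk i = k},
        (∑ j : {j : Fin n // blk j = k}, A i.1 j.1 * v j.1) ≤ ρ * v i.1 := by
      intro i
      rw [hsub]
      have htot := Finset.sum_filter_add_sum_filter_not Finset.univ
        (fun j => blk j = k) (fun j => A i.1 j * v j)
      rw [hrow i.1] at htot
      have h0 : 0 ≤ ∑ j ∈ Finset.univ.filter (fun j => ¬ blk j = k), A i.1 j * v j :=
        Finset.sum_nonneg fun j _ => mul_nonneg (hA _ _) (hvpos j).le
      linarith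
    by_cases hcase : ∀ i, blk i = k → ∀ j, ¬ blk j = k → A i j = 0
    · -- block k is final: contradict minimality
      exfalso
      rcases eq_or_lt_of_le hρ0 with hρzero | hρpos
      · -- ρ = 0, hence A = 0
        have hAzero : ∀ i j, A i j = 0 := by
          intro i j
          have h := hrow i
          rw [← hρzero, zero_mul] at h
          have hterm : ∀ l ∈ Finset.univ, 0 ≤ A i l * v l :=
            fun l _ => mul_nonneg (hA i l) (hvpos l).le
          have h' := (Finset.sum_eq_zero_iff_of_nonneg hterm).mp h j (Finset.mem_univ j)
          rcases mul_eq_zero.mp h' with h'' | h''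
          · exact h''
          · exact absurd h'' (hvpos j).ne'
        apply hminimal
        refine ⟨fun i => if blk i = k then v i else 0, ?_, ?_, ?_, ?_⟩
        · intro i
          dsimp only
          by_cases h : blk i = k
          · rw [if_pos h]; exact (hvpos i).le
          · rw [if_neg h]
        · intro h
          have := congrFun h ik
          rw [if_pos hik] at this
          exact (hvpos ik).ne' this
        · funext i
          simp [Matrix.mulVec, dotProduct, hAzero, ← hρzero]
        · rw [Set.ssubset_def]
          constructor
          · intro i _
            exact (hvpos i).ne'
          · intro h
            have := h (show il ∈ {i | v i ≠ 0} from (hvpos il).ne')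
            simp only [Set.mem_setOf_eq, if_neg hilk, ne_eq, not_true_eq_false] at this
      · -- ρ > 0 : iterate and pass to the limit
        obtain ⟨X, hX0, hXsucc⟩ : ∃ X : ℕ → Fin n → ℝ,
            (∀ i, X 0 i = if blk i ≤ k then v i else 0) ∧
            ∀ m i, X (m+1) i = ρ⁻¹ * ∑ j, A i j * X m j := by
          refine ⟨fun m => (fun y i => ρ⁻¹ * ∑ j, A i j * y j)^[m]
            (fun i => if blk i ≤ k then v i else 0), fun i => rfl, fun m i => ?_⟩
          simp only [Function.iterate_succ_apply']
        have hXnn : ∀ m i, 0 ≤ X m i := by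
          intro m
          induction m with
          | zero =>
            intro i
            rw [hX0]
            by_cases h : blk i ≤ k
            · rw [if_pos h]; exact (hvpos i).le
            · rw [if_neg h]
          | succ m ih =>
            intro i
            rw [hXsucc]
            exact mul_nonneg (inv_nonneg.mpr hρ0)
              (Finset.sum_nonneg fun j _ => mul_nonneg (hA i j) (ih j))
        have hX0v : ∀ i, X 0 i ≤ v i := by
          intro i
          rw [hX0]
          by_cases h : blk i ≤ k
          · rw [if_pos h]
          · rw [if_neg h]; exact (hvpos i).le
        have hX1 : ∀ i, X 1 i ≤ X 0 i := by
          intro i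
          rw [hXsucc]
          by_cases h : blk i ≤ k
          · have hs : ∑ j, A i j * X 0 j ≤ ∑ j, A i j * v j :=
              Finset.sum_le_sum fun j _ => mul_le_mul_of_nonneg_left (hX0v j) (hA i j)
            rw [hX0 i, if_pos h]
            calc ρ⁻¹ * ∑ j, A i j * X 0 j ≤ ρ⁻¹ * ∑ j, A i j * v j :=
                  mul_le_mul_of_nonneg_left hs (inv_nonneg.mpr hρ0)
              _ = ρ⁻¹ * (ρ * v i) := by rw [hrow i]
              _ = v i := by field_simp
          · have hz : ∑ j, A i j * X 0 j = 0 := by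
              apply Finset.sum_eq_zero
              intro j _
              by_cases hj : blk j ≤ k
              · rw [htri i j (lt_of_le_of_lt hj (not_le.mp h)), zero_mul]
              · rw [hX0 j, if_neg hj, mul_zero]
            rw [hz, mul_zero, hX0 i, if_neg h]
        have hXanti : ∀ m i, X (m+1) i ≤ X m i := by
          intro m
          induction m with
          | zero => exact hX1
          | succ m ih =>
            intro i
            rw [hXsucc, hXsucc]
            apply mul_le_mul_of_nonneg_left _ (inv_nonneg.mpr hρ0)
            exact Finset.sum_le_sum fun j _ => mul_le_mul_of_nonneg_left (ih j) (hA i j)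
        have hXk : ∀ m i, blk i = k → X m i = v i := by
          intro m
          induction m with
          | zero =>
            intro i h
            rw [hX0, if_pos (le_of_eq h)]
          | succ m ih =>
            intro i h
            rw [hXsucc]
            have hs : ∑ j, A i j * X m j = ∑ j, A i j * v j := by
              apply Finset.sum_congr rfl
              intro j _
              by_cases hj : blk j = k
              · rw [ih j hj]
              · rw [hcase i h j hj, zero_mul, zero_mul]
            rw [hs, hrow i, ← mul_assoc, inv_mul_cancel₀ hρpos.ne', one_mul]
        -- the limit vector
        set w : Fin n → ℝ := fun i => ⨅ m, X m i with hw
        have hbdd : ∀ i, BddBelow (Set.range fun m => X m i) := by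
          intro i
          refine ⟨0, ?_⟩
          rintro r ⟨m, rfl⟩
          exact hXnn m i
        have hanti : ∀ i, Antitone fun m => X m i :=
          fun i => antitone_nat_of_succ_le fun m => hXanti m i
        have htend : ∀ i, Tendsto (fun m => X m i) atTop (𝓝 (w i)) :=
          fun i => tendsto_atTop_ciInf (hanti i) (hbdd i)
        have hwnn : ∀ i, 0 ≤ w i := fun i => le_ciInf fun m => hXnn m i
        have hwk : ∀ i, blk i = k → w i = v i := by
          intro i h
          rw [hw]
          simp only
          rw [show (fun m => X m i) = fun _ => v i from funext fun m => hXk m i h]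
          exact ciInf_const
        have hwtop : ∀ i, k < blk i → w i = 0 := by
          intro i h
          refine le_antisymm ?_ (hwnn i)
          have h1 : w i ≤ X 0 i := ciInf_le (hbdd i) 0
          rw [hX0, if_neg (not_le.mpr h)] at h1
          exact h1
        have heigw : ∀ i, ∑ j, A i j * w j = ρ * w i := by
          intro i
          have t1 : Tendsto (fun m => ∑ j, A i j * X m j) atTop (𝓝 (∑ j, A i j * w j)) :=
            tendsto_finset_sum _ fun j _ => (htend j).const_mul _
          have t2 : Tendsto (fun m => ρ * X (m+1) i) atTop (𝓝 (ρ * w i)) :=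
            ((htend i).comp (tendsto_add_atTop_nat 1)).const_mul _
          have hEq : (fun m => ∑ j, A i j * X m j) = fun m => ρ * X (m+1) i := by
            funext m
            rw [hXsucc, ← mul_assoc, mul_inv_cancel₀ hρpos.ne', one_mul]
          rw [hEq] at t1
          exact tendsto_nhds_unique t1 t2
        apply hminimal
        refine ⟨w, hwnn, ?_, ?_, ?_⟩
        · intro h
          have := congrFun h ik
          rw [hwk ik hik] at this
          exact (hvpos ik).ne' this
        · funext i
          simp only [Matrix.mulVec, dotProduct, Pi.smul_apply, smul_eq_mul]
          exact heigw i
        · rw [Set.ssubset_def]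
          constructor
          · intro i _
            exact (hvpos i).ne'
          · intro h
            have hmem := h (show il ∈ {i | v i ≠ 0} from (hvpos il).ne')
            have : w il = 0 := hwtop il (by rw [hil]; exact hklt)
            exact hmem this
    · -- block k is not final: strict inequality
      push_neg at hcase
      obtain ⟨i1, hbi1, j1, hbj1, hAij⟩ := hcase
      apply specRad_lt_of_subinv _ (fun i j => hA _ _)
        (fun i : {i : Fin n // blk i = k} => v i.1) (fun i => hvpos _) ρ hle ⟨i1, hbi1⟩
      · show (∑ j : {j : Fin n // blk j = k}, A i1 j.1 * v j.1) < ρ * v i1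
        rw [hsub]
        have htot := Finset.sum_filter_add_sum_filter_not Finset.univ
          (fun j => blk j = k) (fun j => A i1 j * v j)
        rw [hrow i1] at htot
        have hpos : 0 < ∑ j ∈ Finset.univ.filter (fun j => ¬ blk j = k), A i1 j * v j := by
          apply Finset.sum_pos'
          · intro j _
            exact mul_nonneg (hA _ _) (hvpos j).le
          · refine ⟨j1, ?_, ?_⟩
            · simp [hbj1]
            · exact mul_pos (lt_of_le_of_ne (hA i1 j1) (Ne.symm hAij)) (hvpos j1)
        linarith
      · intro Λs hΛne hΛnuniv hzero
        apply hirr k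
        refine ⟨{j : Fin n | ∃ h : blk j = k, (⟨j, h⟩ : {i : Fin n // blk i = k}) ∉ Λs},
          ?_, ?_, ?_, ?_⟩
        · rintro j ⟨h, -⟩
          exact h
        · obtain ⟨a, ha⟩ := Set.ne_univ_iff_exists_notMem _ |>.mp hΛnuniv
          exact ⟨a.1, a.2, by simpa using ha⟩
        · obtain ⟨a, ha⟩ := hΛne
          intro heq
          have : a.1 ∈ {j : Fin n | ∃ h : blk j = k,
              (⟨j, h⟩ : {i : Fin n // blk i = k}) ∉ Λs} := heq ▸ a.2
          obtain ⟨h', hnot⟩ := this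
          exact hnot (by simpa using ha)
        · rintro i ⟨hiS, hiΛ⟩ j ⟨hj, hjnot⟩
          simp only [Set.mem_setOf_eq] at hiS hiΛ
          push_neg at hiΛ
          exact hzero ⟨i, hiS⟩ (hiΛ hiS) ⟨j, hj⟩ hjnot
end

section
/- Let A be a nonnegative matrix in Frobenius normal form with irreducible diagonal blocks A_1,…,A_q, having a strictly positive minimal leading eigenvector. Then the support of the leading eigenvector of the transpose Aᵀ equals the index set of the last diagonal block A_q. -/
/-!
Call `i → j` an arrow when `A i j ≠ 0`. No arrow leaves the support of a nonnegative left
eigenvector `w`, so by irreducibility that support is a union of blocks; let `k` be the first.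
Pairing `w` restricted to block `k` with `A v = ρ v` shows that no arrow leaves block `k` either.
If `k` were not the last block, a monotone fixed-point argument would give an eigenvector for `ρ`
squeezed between `v` on block `k` and `v` on the blocks up to `k`; it vanishes on the last block,
contradicting the minimality of `v`. So `k` is last, and `w` is supported on it.
-/

open Matrix

theorem Matrix.spectrum_transpose {R m : Type*} [CommRing R] [Fintype m] [DecidableEq m]
    (M : Matrix m m R) : spectrum R Mᵀ = spectrum R M := by
  ext μ
  have h : algebraMap R _ μ - Mᵀ = (algebraMap R (Matrix m m R) μ - M)ᵀ := by
    rw [transpose_sub, algebraMap_eq_diagonal, diagonal_transpose]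
  simp only [spectrum.mem_iff, h, isUnit_transpose]

theorem specRad_transpose {m : Type*} [Fintype m] [DecidableEq m] (A : Matrix m m ℝ) :
    specRad Aᵀ = specRad A := by
  rw [specRad, specRad, transpose_map, spectrum_transpose]

section Nonneg

variable {ι : Type*} [Fintype ι] {A : Matrix ι ι ℝ}

theorem Matrix.mulVec_apply_nonneg (hA : ∀ i j, 0 ≤ A i j) {x : ι → ℝ} (hx : ∀ j, 0 ≤ x j)
    (i : ι) : 0 ≤ (A *ᵥ x) i :=
  Finset.sum_nonneg fun j _ => mul_nonneg (hA i j) (hx j)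

theorem Matrix.monotone_mulVec (hA : ∀ i j, 0 ≤ A i j) : Monotone (A *ᵥ ·) :=
  fun _ _ hxy i => Finset.sum_le_sum fun j _ => mul_le_mul_of_nonneg_left (hxy j) (hA i j)

theorem Matrix.nonneg_of_mulVec_eq_smul (hA : ∀ i j, 0 ≤ A i j) {x : ι → ℝ}
    (hx : ∀ j, 0 ≤ x j) {r : ℝ} (hAx : A *ᵥ x = r • x) {i : ι} (hi : 0 < x i) : 0 ≤ r := by
  have h : 0 ≤ r * x i := by
    rw [← smul_eq_mul, ← Pi.smul_apply, ← hAx]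
    exact mulVec_apply_nonneg hA hx i
  exact nonneg_of_mul_nonneg_left h hi

theorem Matrix.apply_eq_zero_of_mulVec_apply_eq_zero (hA : ∀ i j, 0 ≤ A i j) {x : ι → ℝ}
    (hx : ∀ j, 0 ≤ x j) {i j : ι} (hi : (A *ᵥ x) i = 0) (hj : x j ≠ 0) : A i j = 0 :=
  (mul_eq_zero.mp ((Finset.sum_eq_zero_iff_of_nonneg fun k _ => mul_nonneg (hA i k) (hx k)).mp
    hi j (Finset.mem_univ j))).resolve_right hj

theorem Matrix.apply_eq_zero_of_vecMul_eq_smul (hA : ∀ i j, 0 ≤ A i j) {w : ι → ℝ}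
    (hw : ∀ i, 0 ≤ w i) {r : ℝ} (hwA : w ᵥ* A = r • w) {i j : ι} (hi : w i ≠ 0)
    (hj : w j = 0) : A i j = 0 :=
  apply_eq_zero_of_mulVec_apply_eq_zero (A := Aᵀ) (fun i j => hA j i) hw
    (by rw [mulVec_transpose, hwA, Pi.smul_apply, hj, smul_zero]) hi

theorem Matrix.smul_indicator_le_mulVec_indicator (hA : ∀ i j, 0 ≤ A i j) {S : Set ι}
    (hS : ∀ i ∈ S, ∀ j ∉ S, A i j = 0) {v : ι → ℝ} (hv : ∀ j, 0 ≤ v j) {r : ℝ}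
    (hAv : r • v ≤ A *ᵥ v) : r • S.indicator v ≤ A *ᵥ S.indicator v := by
  intro i
  by_cases hi : i ∈ S
  · calc (r • S.indicator v) i = (r • v) i := by simp [hi]
      _ ≤ (A *ᵥ v) i := hAv i
      _ = (A *ᵥ S.indicator v) i := Finset.sum_congr rfl fun j _ => by
            by_cases hj : j ∈ S <;> simp [hj, hS i hi j]
  · simpa [hi] using mulVec_apply_nonneg hA (Set.indicator_nonneg fun j _ => hv j) i

theorem Matrix.mulVec_indicator_le_smul_indicator (hA : ∀ i j, 0 ≤ A i j) {S : Set ι}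
    (hS : ∀ i ∉ S, ∀ j ∈ S, A i j = 0) {v : ι → ℝ} (hv : ∀ j, 0 ≤ v j) {r : ℝ}
    (hAv : A *ᵥ v ≤ r • v) : A *ᵥ S.indicator v ≤ r • S.indicator v := by
  intro i
  by_cases hi : i ∈ S
  · calc (A *ᵥ S.indicator v) i ≤ (A *ᵥ v) i :=
          monotone_mulVec hA (Set.indicator_le_self' fun j _ => hv j) i
      _ ≤ (r • v) i := hAv i
      _ = (r • S.indicator v) i := by simp [hi]
  · have h : (A *ᵥ S.indicator v) i = 0 := Finset.sum_eq_zero fun j _ => by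
      by_cases hj : j ∈ S <;> simp [hj, hS i hi j]
    simp [h, hi]

/-- Knaster–Tarski for `u ↦ (r + 1)⁻¹ • (A *ᵥ u + u)`, a monotone map of the box `[y, z]`
into itself whose fixed points are the eigenvectors of `A` for `r`. -/
theorem Matrix.exists_mulVec_eq_smul_mem_Icc (hA : ∀ i j, 0 ≤ A i j) {r : ℝ} (hr : 0 ≤ r)
    {y z : ι → ℝ} (hyz : y ≤ z) (hy : r • y ≤ A *ᵥ y) (hz : A *ᵥ z ≤ r • z) :
    ∃ x ∈ Set.Icc y z, A *ᵥ x = r • x := by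
  have : Fact (y ≤ z) := ⟨hyz⟩
  have hr1 : 0 < r + 1 := by linarith
  set f : (ι → ℝ) → (ι → ℝ) := fun u => (r + 1)⁻¹ • (A *ᵥ u + u) with hf
  have hfmono : Monotone f := fun u u' h =>
    smul_le_smul_of_nonneg_left (add_le_add (monotone_mulVec hA h) h) (by positivity)
  have hfix : ∀ u, f u = u ↔ A *ᵥ u = r • u := by
    intro u
    rw [hf, inv_smul_eq_iff₀ hr1.ne', add_smul, one_smul, add_left_inj]
  have hfy : y ≤ f y := by
    rw [hf, le_inv_smul_iff_of_pos hr1, add_smul, one_smul]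
    exact add_le_add_left hy y
  have hfz : f z ≤ z := by
    rw [hf, inv_smul_le_iff_of_pos hr1, add_smul, one_smul]
    exact add_le_add_left hz z
  let F : Set.Icc y z →o Set.Icc y z :=
    ⟨fun u => ⟨f u, hfy.trans (hfmono u.2.1), (hfmono u.2.2).trans hfz⟩,
      fun _ _ h => hfmono h⟩
  exact ⟨F.lfp, F.lfp.2, (hfix _).mp (congrArg Subtype.val F.map_lfp)⟩

theorem Matrix.apply_eq_zero_of_mem_of_notMem (hA : ∀ i j, 0 ≤ A i j) {r : ℝ} {v w : ι → ℝ}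
    (hv : ∀ i, 0 < v i) (hAv : A *ᵥ v = r • v) (hw : ∀ i, 0 ≤ w i) (hwA : w ᵥ* A = r • w)
    {S : Set ι} (hwS : ∀ i ∈ S, 0 < w i) (hin : ∀ i ∉ S, ∀ j ∈ S, w i * A i j = 0) :
    ∀ i ∈ S, ∀ j ∉ S, A i j = 0 := by
  intro i hi j hj
  have hwSA : ∀ k ∈ S, (S.indicator w ᵥ* A) k = r * w k := fun k hk => by
    rw [← smul_eq_mul, ← Pi.smul_apply, ← hwA]
    refine Finset.sum_congr rfl fun l _ => ?_
    by_cases hl : l ∈ S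
    · simp [hl]
    · simp [hl, hin l hl k hk]
  -- `S.indicator w ⬝ᵥ (A *ᵥ S.indicator v)` equals `r * (S.indicator w ⬝ᵥ v)`, as does
  -- `S.indicator w ⬝ᵥ (A *ᵥ v)`.
  have hpair : S.indicator w ⬝ᵥ (A *ᵥ Sᶜ.indicator v) = 0 := by
    rw [Set.indicator_compl, mulVec_sub, dotProduct_sub, dotProduct_mulVec _ _ (S.indicator v),
      hAv, sub_eq_zero]
    refine Finset.sum_congr rfl fun k _ => ?_
    by_cases hk : k ∈ S
    · simp only [Set.indicator_of_mem hk, hwSA k hk, Pi.smul_apply, smul_eq_mul]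
      ring
    · simp [hk]
  have hnonneg : ∀ k, 0 ≤ S.indicator w k * (A *ᵥ Sᶜ.indicator v) k := fun k =>
    mul_nonneg (Set.indicator_nonneg (fun l _ => hw l) k)
      (mulVec_apply_nonneg hA (Set.indicator_nonneg (fun l _ => (hv l).le)) k)
  have hrow : (A *ᵥ Sᶜ.indicator v) i = 0 := by
    have h := (Finset.sum_eq_zero_iff_of_nonneg fun k _ => hnonneg k).mp hpair i
      (Finset.mem_univ i)
    rw [Set.indicator_of_mem hi] at h
    exact (mul_eq_zero.mp h).resolve_left (hwS i hi).ne'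
  exact apply_eq_zero_of_mulVec_apply_eq_zero hA (Set.indicator_nonneg fun l _ => (hv l).le) hrow
    (by simp [hj, (hv j).ne'])

end Nonneg

theorem IrreducibleOn.subset_of_inter_nonempty {n : ℕ} {B : Matrix (Fin n) (Fin n) ℝ}
    {S T : Set (Fin n)} (hS : IrreducibleOn B S) (hT : ∀ i ∈ T, ∀ j ∉ T, B i j = 0)
    (hST : (S ∩ T).Nonempty) : S ⊆ T := by
  by_contra hsub
  obtain ⟨j, hjS, hjT⟩ := Set.not_subset.mp hsub
  obtain ⟨i, hiS, hiT⟩ := hST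
  refine hS ⟨S \ T, Set.sdiff_subset, ⟨j, hjS, hjT⟩, fun h => ?_, fun k hk l hl => ?_⟩
  · exact ((Set.ext_iff.mp h i).mpr hiS).2 hiT
  · exact hT k (by_contra fun hkT => hk.2 ⟨hk.1, hkT⟩) l hl.2

theorem eq_last_of_closed_block {ι : Type*} [Fintype ι] {q : ℕ} {A : Matrix ι ι ℝ}
    (hA : ∀ i j, 0 ≤ A i j) {blk : ι → Fin (q + 1)} (hsurj : Function.Surjective blk)
    (htri : ∀ i j, blk j < blk i → A i j = 0) {r : ℝ} (hr : 0 ≤ r) {v : ι → ℝ}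
    (hv : ∀ i, 0 < v i) (hAv : A *ᵥ v = r • v)
    (hminimal : ¬ ∃ w : ι → ℝ, (∀ i, 0 ≤ w i) ∧ w ≠ 0 ∧
        A *ᵥ w = r • w ∧ {i | w i ≠ 0} ⊂ {i | v i ≠ 0})
    {k : Fin (q + 1)} (hk : ∀ i ∈ {i | blk i = k}, ∀ j ∉ {i | blk i = k}, A i j = 0) :
    k = Fin.last q := by
  by_contra hlast
  have hv₀ : ∀ i, 0 ≤ v i := fun i => (hv i).le
  obtain ⟨x, ⟨hyx, hxz⟩, hAx⟩ := exists_mulVec_eq_smul_mem_Icc hA hr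
    (Set.indicator_le_indicator_of_subset (s := {i | blk i = k}) (t := {i | blk i ≤ k})
      (fun i hi => le_of_eq hi) hv₀)
    (smul_indicator_le_mulVec_indicator hA hk hv₀ hAv.ge)
    (mulVec_indicator_le_smul_indicator hA
      (fun i hi j hj => htri i j (lt_of_le_of_lt hj (not_le.mp hi))) hv₀ hAv.le)
  have hx₀ : ∀ i, 0 ≤ x i := fun i => (Set.indicator_nonneg (fun j _ => hv₀ j) i).trans (hyx i)
  obtain ⟨ik, hik⟩ := hsurj k
  obtain ⟨iq, hiq⟩ := hsurj (Fin.last q)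
  refine hminimal ⟨x, hx₀, fun h => ?_, hAx, ?_⟩
  · have hxik := hyx ik
    simp only [h, Set.indicator_of_mem (show ik ∈ {i | blk i = k} from hik)] at hxik
    exact (hv ik).not_ge hxik
  · refine (Set.ssubset_iff_of_subset fun i _ => (hv i).ne').mpr ⟨iq, (hv iq).ne', ?_⟩
    have hiq' : iq ∉ {i | blk i ≤ k} := fun h => hlast (le_antisymm (Fin.le_last k) (hiq ▸ h))
    have hxiq := hxz iq
    rw [Set.indicator_of_notMem hiq'] at hxiq
    exact not_not.mpr (le_antisymm hxiq (hx₀ iq))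

theorem stmt17_general {n q : ℕ} (A : Matrix (Fin n) (Fin n) ℝ) (hA : ∀ i j, 0 ≤ A i j)
    (blk : Fin n → Fin (q + 1))
    (hsurj : Function.Surjective blk)
    (htri : ∀ i j, blk j < blk i → A i j = 0)
    (hirr : ∀ k, IrreducibleOn A {i | blk i = k})
    (v : Fin n → ℝ) (hvpos : ∀ i, 0 < v i)
    (hveig : A.mulVec v = specRad A • v)
    (hminimal : ¬ ∃ w : Fin n → ℝ, (∀ i, 0 ≤ w i) ∧ w ≠ 0 ∧
        A.mulVec w = specRad A • w ∧ {i | w i ≠ 0} ⊂ {i | v i ≠ 0}) :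
    ∀ w : Fin n → ℝ, (∀ i, 0 ≤ w i) → w ≠ 0 →
      A.transpose.mulVec w = specRad A.transpose • w →
      {i | w i ≠ 0} = {i | blk i = Fin.last q} := by
  intro w hw hw0 hweig
  rw [specRad_transpose, mulVec_transpose] at hweig
  obtain ⟨i₀, hi₀, hmin⟩ : ∃ i₀, w i₀ ≠ 0 ∧ ∀ i, w i ≠ 0 → blk i₀ ≤ blk i := by
    obtain ⟨i₀, hi₀, hmin⟩ := Finset.exists_min_image {i | w i ≠ 0} blk
      (Finset.filter_nonempty_iff.mpr (by simpa [funext_iff] using hw0))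
    exact ⟨i₀, by simpa using hi₀, fun i hi => hmin i (by simpa using hi)⟩
  have hr : 0 ≤ specRad A := nonneg_of_mulVec_eq_smul hA (fun i => (hvpos i).le) hveig (hvpos i₀)
  have hblock : {i | blk i = blk i₀} ⊆ {i | w i ≠ 0} :=
    (hirr _).subset_of_inter_nonempty
      (fun i hi j hj => apply_eq_zero_of_vecMul_eq_smul hA hw hweig hi (not_not.mp hj))
      ⟨i₀, rfl, hi₀⟩
  have hclosed := apply_eq_zero_of_mem_of_notMem hA hvpos hveig hw hweig
    (fun i hi => (hw i).lt_of_ne' (hblock hi)) fun i hi j hj => by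
      by_cases hwi : w i = 0
      · rw [hwi, zero_mul]
      · rw [htri i j (hj.trans_lt ((hmin i hwi).lt_of_ne' hi)), mul_zero]
  have hlast := eq_last_of_closed_block hA hsurj htri hr hvpos hveig hminimal hclosed
  ext i
  exact ⟨fun hi => le_antisymm (Fin.le_last _) (hlast ▸ hmin i hi),
    fun hi => hblock (hi.trans hlast.symm)⟩

/-- Let `A ≥ 0` be in Frobenius normal form with irreducible diagonal blocks
(the level sets of a monotone surjective labelling `blk`, entries below the
block diagonal vanishing), and suppose `A` has a strictly positive minimal
leading eigenvector.  Then the support of any leading eigenvector of the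
transpose `Aᵀ` equals the index set of the last diagonal block (the "basic
set" of `A`). -/
theorem stmt17 {n q : ℕ} (A : Matrix (Fin n) (Fin n) ℝ) (hA : ∀ i j, 0 ≤ A i j)
    (blk : Fin n → Fin (q + 1)) (hmono : Monotone blk)
    (hsurj : Function.Surjective blk)
    (htri : ∀ i j, blk j < blk i → A i j = 0)
    (hirr : ∀ k, IrreducibleOn A {i | blk i = k})
    (v : Fin n → ℝ) (hvpos : ∀ i, 0 < v i)
    (hveig : A.mulVec v = specRad A • v)
    (hminimal : ¬ ∃ w : Fin n → ℝ, (∀ i, 0 ≤ w i) ∧ w ≠ 0 ∧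
        A.mulVec w = specRad A • w ∧ {i | w i ≠ 0} ⊂ {i | v i ≠ 0}) :
    ∀ w : Fin n → ℝ, (∀ i, 0 ≤ w i) → w ≠ 0 →
      A.transpose.mulVec w = specRad A.transpose • w →
      {i | w i ≠ 0} = {i | blk i = Fin.last q} :=
  stmt17_general A hA blk hsurj htri hirr v hvpos hveig hminimal
end
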